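/- Let G be a graph with n vertices that admits a 4-strategy with respect to K_3 (i.e., G ≤₄ K_3). Then G has a proper coloring with at most 3⌈√n⌉ colors. -/

import Mathlib

/-- `H` is a `k`-strategy on the graph `G` and the complete graph `K_q`:
a nonempty family of partial homomorphisms (partial proper `q`-colorings,
encoded as maps `V → Option (Fin q)`) with domains of size at most `k`,
closed under restrictions, and with the extension property up to `k`. -/
def IsStrategy {V : Type*} (G : SimpleGraph V) (q k : ℕ)
    (H : Set (V → Option (Fin q))) : Prop :=
  H.Nonempty ∧
  (∀ h ∈ H, ∀ u v : V, G.Adj u v →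
    ∀ a b : Fin q, h u = some a → h v = some b → a ≠ b) ∧
  (∀ h ∈ H, {v | h v ≠ none}.Finite ∧ {v | h v ≠ none}.ncard ≤ k) ∧
  (∀ h ∈ H, ∀ h' : V → Option (Fin q),
    (∀ v, h' v = h v ∨ h' v = none) → h' ∈ H) ∧
  (∀ h ∈ H, {v | h v ≠ none}.ncard < k → ∀ x, h x = none →
    ∃ h' ∈ H, (∀ v, v ≠ x → h' v = h v) ∧ h' x ≠ none)

/-!
Fix a vertex `x` and a neighbour `y` of `x`, colored `a` and `b` by some member of the
strategy. Keeping `x` and the anchor `y` colored, the strategy can walk a third colored vertex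
along any walk in the neighbourhood of `x`: extending to the next vertex uses the fourth slot,
and the new color must differ from `a` and from the previous one, so in `K_3` the colors
alternate between the two colors other than `a`. A closed walk from `y` ends with color `b`,
so it is even: every neighbourhood is bipartite.

Wigderson's coloring then works for any graph with bipartite neighbourhoods: as long as some
vertex has at least `s = ⌈√n⌉` neighbours among the uncolored vertices, color those neighbours
with two fresh colors. Each round removes at least `s` of the `n ≤ s²` vertices, so there are
at most `s` rounds, after which every vertex has fewer than `s` uncolored neighbours and the
rest is colored greedily with `s` colors.
-/

open Finset

theorem le_ceil_sqrt_mul_self (n : ℕ) : n ≤ ⌈√n⌉₊ * ⌈√n⌉₊ := by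
  have := (Real.sqrt_le_left (Nat.cast_nonneg _)).1 (Nat.le_ceil √(n : ℝ))
  rw [sq] at this
  exact_mod_cast this

namespace SimpleGraph

variable {V : Type*} {G : SimpleGraph V}

theorem Colorable.induce_mono {s t : Set V} (hst : s ⊆ t) {k : ℕ}
    (h : (G.induce t).Colorable k) : (G.induce s).Colorable k :=
  h.of_hom (G.induceHomOfLE hst).toHom

theorem Colorable.induce_union {s t : Set V} {a b : ℕ} (hs : (G.induce s).Colorable a)
    (ht : (G.induce t).Colorable b) : (G.induce (s ∪ t)).Colorable (a + b) := by
  classical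
  obtain ⟨C⟩ := hs
  obtain ⟨D⟩ := ht
  let E : (G.induce (s ∪ t)).Coloring (Fin a ⊕ Fin b) := Coloring.mk
    (fun v => if hv : v.1 ∈ s then .inl (C ⟨v, hv⟩)
      else .inr (D ⟨v, v.2.resolve_left hv⟩))
    (fun {u v} huv => by
      by_cases hu : u.1 ∈ s <;> by_cases hv : v.1 ∈ s <;>
        simp only [hu, hv, dite_true, dite_false, ne_eq, reduceCtorEq, not_false_eq_true,
          Sum.inl.injEq, Sum.inr.injEq]
      · exact C.valid huv
      · exact D.valid huv)
  simpa using E.colorable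

theorem Colorable.induce_insert [DecidableRel G.Adj] {s : Finset V} {a : V} {k : ℕ}
    (h : (G.induce s).Colorable k) (ha : #{w ∈ s | G.Adj a w} < k) :
    (G.induce (insert a (s : Set V))).Colorable k := by
  classical
  obtain ⟨C⟩ := h
  let f : V → Fin k := fun w => if hw : w ∈ s then C ⟨w, hw⟩ else ⟨0, by omega⟩
  obtain ⟨c, -, hc⟩ : ∃ c ∈ (univ : Finset (Fin k)), c ∉ {w ∈ s | G.Adj a w}.image f :=
    exists_mem_notMem_of_card_lt_card (by simpa using card_image_le.trans_lt ha)
  have hf : ∀ {u v}, u ∈ s → v ∈ s → G.Adj u v → f u ≠ f v := fun {u v} hu hv huv => by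
    simpa [f, hu, hv] using C.valid (v := ⟨u, hu⟩) (w := ⟨v, hv⟩) huv
  refine ⟨Coloring.mk (fun v => if v.1 = a then c else f v) fun {u v} huv => ?_⟩
  have hmem : ∀ w : ↥(insert a (s : Set V)), w.1 ≠ a → w.1 ∈ s := fun w hw =>
    w.2.resolve_left hw
  by_cases hu : u.1 = a <;> by_cases hv : v.1 = a <;> simp only [hu, hv, if_true, if_false]
  · exact absurd (hu.trans hv.symm) (G.ne_of_adj huv)
  · exact fun h => hc (mem_image.2
      ⟨v, mem_filter.2 ⟨hmem v hv, by simpa [hu] using induce_adj.1 huv⟩, h.symm⟩)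
  · exact fun h => hc (mem_image.2
      ⟨u, mem_filter.2 ⟨hmem u hu, by simpa [hv] using induce_adj.1 huv.symm⟩, h⟩)
  · exact hf (hmem u hu) (hmem v hv) huv

theorem colorable_induce_of_forall_card_lt [DecidableRel G.Adj] {k : ℕ} (s : Finset V)
    (hs : ∀ v ∈ s, #{w ∈ s | G.Adj v w} < k) : (G.induce s).Colorable k := by
  classical
  induction s using Finset.induction_on with
  | empty => simpa using Colorable.of_isEmpty k
  | insert a s _ ih =>
    have hsub : ∀ v, #{w ∈ s | G.Adj v w} ≤ #{w ∈ insert a s | G.Adj v w} := fun v =>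
      card_le_card (filter_subset_filter _ (subset_insert a s))
    rw [coe_insert]
    exact (ih fun v hv => (hsub v).trans_lt (hs v (mem_insert_of_mem hv))).induce_insert
      ((hsub a).trans_lt (hs a (mem_insert_self a s)))

theorem colorable_induce_of_card_le_mul [DecidableRel G.Adj]
    (hG : ∀ x, (G.induce (G.neighborSet x)).Colorable 2) (k m : ℕ) (s : Finset V)
    (hs : #s ≤ m * k) : (G.induce s).Colorable (k + 2 * m) := by
  classical
  induction m generalizing s with
  | zero =>
    obtain rfl : s = ∅ := by simpa using hs
    exact colorable_induce_of_forall_card_lt ∅ (by simp)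
  | succ m ih =>
    by_cases hdeg : ∀ v ∈ s, #{w ∈ s | G.Adj v w} < k
    · exact (colorable_induce_of_forall_card_lt s hdeg).mono (by omega)
    push Not at hdeg
    obtain ⟨y, -, hy⟩ := hdeg
    set N := {w ∈ s | G.Adj y w}
    have hNs : N ⊆ s := filter_subset _ _
    have hN : (G.induce N).Colorable 2 := (hG y).induce_mono fun w hw => (mem_filter.1 hw).2
    have hrest := ih (s \ N) (by rw [card_sdiff_of_subset hNs]; lia)
    have := hrest.induce_union hN
    rwa [← coe_union, sdiff_union_of_subset hNs] at this

theorem colorable_three_mul_ceil_sqrt [Fintype V]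
    (hG : ∀ x, (G.induce (G.neighborSet x)).Colorable 2) :
    G.Colorable (3 * ⌈√(Fintype.card V)⌉₊) := by
  classical
  have := colorable_induce_of_card_le_mul hG _ _ univ
    (by rw [card_univ]; exact le_ceil_sqrt_mul_self _)
  rw [coe_univ, colorable_congr G.induceUnivIso] at this
  exact this.mono (by omega)

end SimpleGraph

open SimpleGraph

theorem ncard_setOf_ne_none_le_card {V α : Type*} {h : V → Option α} {s : Finset V}
    (hs : ∀ v ∉ s, h v = none) : {v | h v ≠ none}.ncard ≤ #s := by
  refine (Set.ncard_le_ncard (fun v hv => ?_) s.finite_toSet).trans (by simp)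
  by_contra hvs
  exact hv (hs v hvs)

namespace IsStrategy

variable {V : Type*} {G : SimpleGraph V} {q k : ℕ} {H : Set (V → Option (Fin q))}

theorem ne_of_adj (hH : IsStrategy G q k H) {h : V → Option (Fin q)} (hh : h ∈ H) {u v : V}
    (huv : G.Adj u v) {a b : Fin q} (hu : h u = some a) (hv : h v = some b) : a ≠ b :=
  hH.2.1 h hh u v huv a b hu hv

theorem restrict_mem (hH : IsStrategy G q k H) {h : V → Option (Fin q)} (hh : h ∈ H)
    (p : V → Prop) [DecidablePred p] : (fun v => if p v then h v else none) ∈ H :=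
  hH.2.2.2.1 h hh _ fun v => by by_cases hv : p v <;> simp [hv]

theorem exists_extend (hH : IsStrategy G q k H) {h : V → Option (Fin q)} (hh : h ∈ H)
    (hk : {v | h v ≠ none}.ncard < k) (w : V) :
    ∃ h' ∈ H, (∀ v, h v ≠ none → h' v = h v) ∧ h' w ≠ none := by
  by_cases hw : h w = none
  · obtain ⟨h', hh', hagree, hw'⟩ := hH.2.2.2.2 h hh hk w hw
    exact ⟨h', hh', fun v hv => hagree v (by rintro rfl; exact hv hw), hw'⟩
  · exact ⟨h, hh, fun _ _ => rfl, hw⟩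

theorem exists_mem_ne_none_iff (hH : IsStrategy G q k H) (s : Finset V) (hs : #s ≤ k) :
    ∃ h ∈ H, ∀ v, h v ≠ none ↔ v ∈ s := by
  classical
  induction s using Finset.induction_on with
  | empty =>
    obtain ⟨h, hh⟩ := hH.1
    exact ⟨fun _ => none, hH.2.2.2.1 h hh _ fun _ => Or.inr rfl, by simp⟩
  | insert a s ha ih =>
    rw [card_insert_of_notMem ha] at hs
    obtain ⟨h, hh, hdom⟩ := ih (by omega)
    have hnone : ∀ v ∉ s, h v = none := fun v hv => not_not.1 (mt (hdom v).1 hv)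
    obtain ⟨h', hh', hagree, hw'⟩ :=
      hH.2.2.2.2 h hh ((ncard_setOf_ne_none_le_card hnone).trans_lt (by omega)) a (hnone a ha)
    refine ⟨h', hh', fun v => ?_⟩
    by_cases hva : v = a
    · simp [hva, hw']
    · simp [hagree v hva, hdom v, hva]

end IsStrategy

def HasTripleColoring {V : Type*} {q : ℕ} (H : Set (V → Option (Fin q))) (x y z : V)
    (a b c : Fin q) : Prop :=
  ∃ h ∈ H, h x = some a ∧ h y = some b ∧ h z = some c ∧
    ∀ v ∉ ({x, y, z} : Set V), h v = none

namespace HasTripleColoring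

variable {V : Type*} {G : SimpleGraph V} {k : ℕ}

section

variable {q : ℕ} {H : Set (V → Option (Fin q))} {x y z : V} {a b c : Fin q}

theorem ne_of_adj (hH : IsStrategy G q k H) (ht : HasTripleColoring H x y z a b c)
    (hxz : G.Adj x z) : c ≠ a := by
  obtain ⟨h, hh, hx, -, hz, -⟩ := ht
  exact (hH.ne_of_adj hh hxz hx hz).symm

theorem exists_step (hH : IsStrategy G q k H) (hk : 3 < k)
    (ht : HasTripleColoring H x y z a b c) {w : V} (hzw : G.Adj z w) :
    ∃ d ≠ c, HasTripleColoring H x y w a b d := by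
  classical
  obtain ⟨h, hh, hx, hy, hz, hdom⟩ := ht
  obtain ⟨h', hh', hagree, hw⟩ := hH.exists_extend hh ((ncard_setOf_ne_none_le_card
    (s := {x, y, z}) fun v hv => hdom v (by simpa using hv)).trans_lt
      (card_le_three.trans_lt hk)) w
  obtain ⟨d, hd⟩ := Option.ne_none_iff_exists'.1 hw
  have hagree' : ∀ {v e}, h v = some e → h' v = some e := fun hv => by
    rw [hagree _ (by simp [hv]), hv]
  refine ⟨d, (hH.ne_of_adj hh' hzw (hagree' hz) hd).symm,
    fun v => if v ∈ ({x, y, w} : Set V) then h' v else none, hH.restrict_mem hh' _, ?_⟩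
  simp_all

end

theorem exists_of_walk {H : Set (V → Option (Fin 3))} (hH : IsStrategy G 3 k H) (hk : 3 < k)
    {x y : V} {a b : Fin 3} :
    ∀ {u v : G.neighborSet x} (p : (G.induce (G.neighborSet x)).Walk u v) {c : Fin 3},
      HasTripleColoring H x y u a b c →
      ∃ d, HasTripleColoring H x y v a b d ∧ (d = c ↔ Even p.length)
  | _, _, .nil, c, ht => ⟨c, ht, by simp⟩
  | u, v, .cons (v := w) huw p, c, ht => by
    obtain ⟨e, hec, hte⟩ := ht.exists_step hH hk huw
    obtain ⟨d, htd, hde⟩ := exists_of_walk hH hk p hte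
    refine ⟨d, htd, ?_⟩
    -- `c`, `d`, `e` all avoid the color `a` of `x`, and only two colors remain
    have hK3 : ∀ a c d e : Fin 3, c ≠ a → d ≠ a → e ≠ a → e ≠ c → (d = c ↔ d ≠ e) := by
      decide
    rw [hK3 a c d e (ht.ne_of_adj hH u.2) (htd.ne_of_adj hH v.2) (hte.ne_of_adj hH w.2) hec,
      Walk.length_cons, Nat.even_add_one, ← hde]

end HasTripleColoring

theorem IsStrategy.colorable_two_induce_neighborSet {V : Type*} {G : SimpleGraph V} {k : ℕ}
    {H : Set (V → Option (Fin 3))} (hH : IsStrategy G 3 k H) (hk : 3 < k) (x : V) :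
    (G.induce (G.neighborSet x)).Colorable 2 := by
  classical
  refine two_colorable_iff_forall_loop_even.2 fun u p => ?_
  obtain ⟨h, hh, hdom⟩ := hH.exists_mem_ne_none_iff {x, u.1} (card_le_two.trans (by omega))
  obtain ⟨a, hx⟩ := Option.ne_none_iff_exists'.1 ((hdom x).2 (by simp))
  obtain ⟨b, hu⟩ := Option.ne_none_iff_exists'.1 ((hdom u).2 (by simp))
  have ht : HasTripleColoring H x u u a b b :=
    ⟨h, hh, hx, hu, hu, fun v hv => not_not.1 fun hv' => hv (by simpa using (hdom v).1 hv')⟩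
  obtain ⟨d, ⟨h', -, -, hb, hd, -⟩, hdb⟩ := ht.exists_of_walk hH hk p
  exact hdb.1 (Option.some_injective _ (hd.symm.trans hb))

/-- Wigderson's algorithm as a width-4 algorithm: if a graph `G` with `n`
vertices admits a 4-strategy with respect to `K_3`, then `G` is properly
colorable with `3⌈√n⌉` colors. -/
theorem colorable_of_four_strategy {V : Type*} [Fintype V]
    (G : SimpleGraph V)
    (hstrat : ∃ H : Set (V → Option (Fin 3)), IsStrategy G 3 4 H) :
    G.Colorable (3 * ⌈Real.sqrt (Fintype.card V)⌉₊) := by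
  obtain ⟨H, hH⟩ := hstrat
  exact colorable_three_mul_ceil_sqrt (hH.colorable_two_induce_neighborSet (by norm_num))
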